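/- (Approximation quality of CSO minimizers.) Let C ⊆ ℝ^p × ℝ^{K−1} be nonempty, let F_α be the CSO objective and F_∞ the hinge objective, and set C₀ = Σ_{i=1}^n w_i·(Σ_{j=1}^{k_i−1} λ_j + Σ_{j=k_i}^{K−1} μ_j). If (β*, τ*) ∈ C minimizes F_α over C, then for every (β, τ) ∈ C one has F_∞(β*, τ*) ≤ F_∞(β, τ) + (log 2 / α)·C₀; i.e., any CSO minimizer is within (log 2 / α)·C₀ of the infimum of the hinge objective over C. -/

import Mathlib

/-!
The softplus penalty is squeezed between the hinge and the hinge shifted by `log 2 / α`: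
`max t 0 ≤ φ_α t ≤ max t 0 + log 2 / α`. Summing with nonnegative weights, `F_∞ ≤ F_α ≤ F_∞ + c`
with `c = (log 2 / α)·C₀`, hence `F_∞(β*, τ*) ≤ F_α(β*, τ*) ≤ F_α(β, τ) ≤ F_∞(β, τ) + c`.
-/

open RealInnerProductSpace

/-- Softplus with temperature `α`. -/
noncomputable def softplus (α t : ℝ) : ℝ := (1 / α) * Real.log (1 + Real.exp (α * t))

/-- Per-instance loss built from a generic penalty `φ` (softplus or hinge); threshold
index `j ∈ {1,…,K−1}` is represented by `j : Fin (K-1)` with value `(j : ℕ) + 1`. -/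
noncomputable def instLoss {p K : ℕ} (φ : ℝ → ℝ) (x : EuclideanSpace ℝ (Fin p)) (k : ℕ)
    (lam mu : Fin (K - 1) → ℝ) (β : EuclideanSpace ℝ (Fin p)) (τ : Fin (K - 1) → ℝ) : ℝ :=
  ∑ j : Fin (K - 1),
    if (j : ℕ) + 1 < k then lam j * φ (τ j - ⟪β, x⟫)
    else mu j * φ (⟪β, x⟫ - τ j)

open Real

theorem max_le_log_one_add_exp (u : ℝ) : max u 0 ≤ log (1 + exp u) := by
  rw [le_log_iff_exp_le (by positivity), exp_monotone.map_max, exp_zero]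
  exact max_le (by linarith) (by linarith [exp_pos u])

theorem log_one_add_exp_le (u : ℝ) : log (1 + exp u) ≤ max u 0 + log 2 := by
  rw [log_le_iff_le_exp (by positivity), exp_add, exp_log two_pos, exp_monotone.map_max, exp_zero]
  linarith [le_max_left (exp u) 1, le_max_right (exp u) 1]

theorem max_le_softplus {α : ℝ} (hα : 0 < α) (t : ℝ) : max t 0 ≤ softplus α t := by
  rw [softplus, one_div, le_inv_mul_iff₀ hα, mul_max_of_nonneg _ _ hα.le, mul_zero]
  exact max_le_log_one_add_exp _

theorem softplus_le_max_add {α : ℝ} (hα : 0 < α) (t : ℝ) :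
    softplus α t ≤ max t 0 + log 2 / α := by
  rw [softplus, one_div, inv_mul_le_iff₀ hα, mul_add, mul_div_cancel₀ _ hα.ne',
    mul_max_of_nonneg _ _ hα.le, mul_zero]
  exact log_one_add_exp_le _

section Loss

variable {p K : ℕ} (x : EuclideanSpace ℝ (Fin p)) (k : ℕ) (lam mu : Fin (K - 1) → ℝ)
  (β : EuclideanSpace ℝ (Fin p)) (τ : Fin (K - 1) → ℝ)

def boundaryWeight : ℝ :=
  (∑ j : Fin (K - 1), if (j : ℕ) + 1 < k then lam j else 0) +
    (∑ j : Fin (K - 1), if (j : ℕ) + 1 < k then 0 else mu j)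

variable {x k lam mu β τ} in
theorem instLoss_mono {φ ψ : ℝ → ℝ} (hφψ : ∀ t, φ t ≤ ψ t) (hlam : ∀ j, 0 ≤ lam j)
    (hmu : ∀ j, 0 ≤ mu j) : instLoss φ x k lam mu β τ ≤ instLoss ψ x k lam mu β τ := by
  refine Finset.sum_le_sum fun j _ => ?_
  split
  · exact mul_le_mul_of_nonneg_left (hφψ _) (hlam j)
  · exact mul_le_mul_of_nonneg_left (hφψ _) (hmu j)

theorem instLoss_add_const (φ : ℝ → ℝ) (c : ℝ) :
    instLoss (fun t => φ t + c) x k lam mu β τ =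
      instLoss φ x k lam mu β τ + c * boundaryWeight k lam mu := by
  simp only [instLoss, boundaryWeight, mul_add, Finset.mul_sum, ← Finset.sum_add_distrib]
  refine Finset.sum_congr rfl fun j _ => ?_
  split <;> ring

end Loss

section Objective

variable {p K n : ℕ} (x : Fin n → EuclideanSpace ℝ (Fin p)) (k : Fin n → ℕ) (w : Fin n → ℝ)
  (lam mu : Fin (K - 1) → ℝ) (β : EuclideanSpace ℝ (Fin p)) (τ : Fin (K - 1) → ℝ)

noncomputable def csoObjective (φ : ℝ → ℝ) : ℝ :=
  ∑ i : Fin n, w i * instLoss φ (x i) (k i) lam mu β τ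

variable {x k w lam mu β τ} in
theorem csoObjective_mono {φ ψ : ℝ → ℝ} (hφψ : ∀ t, φ t ≤ ψ t) (hw : ∀ i, 0 ≤ w i)
    (hlam : ∀ j, 0 ≤ lam j) (hmu : ∀ j, 0 ≤ mu j) :
    csoObjective x k w lam mu β τ φ ≤ csoObjective x k w lam mu β τ ψ :=
  Finset.sum_le_sum fun i _ =>
    mul_le_mul_of_nonneg_left (instLoss_mono hφψ hlam hmu) (hw i)

theorem csoObjective_add_const (φ : ℝ → ℝ) (c : ℝ) :
    csoObjective x k w lam mu β τ (fun t => φ t + c) =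
      csoObjective x k w lam mu β τ φ + c * ∑ i, w i * boundaryWeight (k i) lam mu := by
  simp only [csoObjective, instLoss_add_const, Finset.mul_sum, ← Finset.sum_add_distrib]
  refine Finset.sum_congr rfl fun i _ => ?_
  ring

end Objective

theorem cso_minimizer_near_hinge_optimum (p K n : ℕ)
    (x : Fin n → EuclideanSpace ℝ (Fin p)) (k : Fin n → ℕ)
    (w : Fin n → ℝ) (hw : ∀ i, 0 ≤ w i)
    (lam mu : Fin (K - 1) → ℝ) (hlam : ∀ j, 0 ≤ lam j) (hmu : ∀ j, 0 ≤ mu j)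
    (α : ℝ) (hα : 0 < α)
    (C : Set (EuclideanSpace ℝ (Fin p) × (Fin (K - 1) → ℝ)))
    (βs : EuclideanSpace ℝ (Fin p)) (τs : Fin (K - 1) → ℝ)
    (hmin : ∀ bt ∈ C,
      (∑ i : Fin n, w i * instLoss (softplus α) (x i) (k i) lam mu βs τs) ≤
      (∑ i : Fin n, w i * instLoss (softplus α) (x i) (k i) lam mu bt.1 bt.2)) :
    ∀ bt ∈ C,
      (∑ i : Fin n, w i * instLoss (fun t => max t 0) (x i) (k i) lam mu βs τs) ≤
      (∑ i : Fin n, w i * instLoss (fun t => max t 0) (x i) (k i) lam mu bt.1 bt.2) +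
        (Real.log 2 / α) *
          ∑ i : Fin n, w i *
            ((∑ j : Fin (K - 1), if (j : ℕ) + 1 < k i then lam j else 0) +
             (∑ j : Fin (K - 1), if (j : ℕ) + 1 < k i then 0 else mu j)) := by
  intro bt hbt
  calc csoObjective x k w lam mu βs τs (fun t => max t 0)
      ≤ csoObjective x k w lam mu βs τs (softplus α) :=
        csoObjective_mono (max_le_softplus hα) hw hlam hmu
    _ ≤ csoObjective x k w lam mu bt.1 bt.2 (softplus α) := hmin bt hbt
    _ ≤ csoObjective x k w lam mu bt.1 bt.2 (fun t => max t 0 + log 2 / α) :=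
        csoObjective_mono (softplus_le_max_add hα) hw hlam hmu
    _ = _ := csoObjective_add_const x k w lam mu _ _ _ _
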